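/- arXiv:1607.00482 — 2 statements merged into one kernel-verified Lean document; each statement's English description precedes it below -/
import Mathlib

section
/- Let (ũ,ṽ) ∈ N with ∫ ũ²(ṽ − |ṽ|) dx < 0 possible only if ṽ takes negative values; if t > 0 satisfies Ψ(t|ũ|, t|ṽ|) = 0 and β > 0, then t ≤ 1, and consequently Φ(t|ũ|,t|ṽ|) ≤ Φ(ũ,ṽ). -/
open MeasureTheory Filter Topology

noncomputable section

/-- The Laplacian of `u`, computed as the trace of the second derivative. -/
def lap {N : ℕ} (u : EuclideanSpace ℝ (Fin N) → ℝ) (x : EuclideanSpace ℝ (Fin N)) : ℝ :=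
  ∑ i : Fin N, iteratedFDeriv ℝ 2 u x (fun _ => EuclideanSpace.single i 1)

/-- Squared equivalent norm `‖u‖_λ² = ∫ |Δu|² + λ ∫ u²`. -/
def nsq {N : ℕ} (lam : ℝ) (u : EuclideanSpace ℝ (Fin N) → ℝ) : ℝ :=
  (∫ x, (lap u x) ^ 2) + lam * ∫ x, (u x) ^ 2

/-- Inner product `⟨u,v⟩_λ = ∫ Δu Δv + λ ∫ u v`. -/
def inr {N : ℕ} (lam : ℝ) (u v : EuclideanSpace ℝ (Fin N) → ℝ) : ℝ :=
  (∫ x, lap u x * lap v x) + lam * ∫ x, u x * v x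

/-- Membership in the Sobolev space `E = W^{2,2}(ℝ^N)`. -/
def MemW22 {N : ℕ} (u : EuclideanSpace ℝ (Fin N) → ℝ) : Prop :=
  ContDiff ℝ 2 u ∧ Integrable (fun x => (u x) ^ 2) ∧
    Integrable (fun x => ‖fderiv ℝ u x‖ ^ 2) ∧
    Integrable (fun x => ‖iteratedFDeriv ℝ 2 u x‖ ^ 2)

/-- Squared standard `W^{2,2}` norm. -/
def stdSq {N : ℕ} (u : EuclideanSpace ℝ (Fin N) → ℝ) : ℝ :=
  (∫ x, ‖iteratedFDeriv ℝ 2 u x‖ ^ 2) + (∫ x, ‖fderiv ℝ u x‖ ^ 2) + ∫ x, (u x) ^ 2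

/-- Radially symmetric functions (the space `H`). -/
def Radial {N : ℕ} (u : EuclideanSpace ℝ (Fin N) → ℝ) : Prop :=
  ∀ x y, ‖x‖ = ‖y‖ → u x = u y

/-- The Nehari functional `Ψ(u,v) = Φ'(u,v)[(u,v)]`. -/
def Psi {N : ℕ} (l1 l2 β : ℝ) (u v : EuclideanSpace ℝ (Fin N) → ℝ) : ℝ :=
  nsq l1 u + nsq l2 v - (∫ x, (u x) ^ 4) - (1 / 2) * (∫ x, |v x| ^ 3)
    - (3 / 2) * β * ∫ x, (u x) ^ 2 * v x

/-- The energy functional `Φ`. -/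
def Phi {N : ℕ} (l1 l2 β : ℝ) (u v : EuclideanSpace ℝ (Fin N) → ℝ) : ℝ :=
  (1 / 2) * nsq l1 u + (1 / 2) * nsq l2 v - (1 / 4) * (∫ x, (u x) ^ 4)
    - (1 / 6) * (∫ x, |v x| ^ 3) - (1 / 2) * β * ∫ x, (u x) ^ 2 * v x

/-- Membership in the (radial) Nehari manifold `𝒩`. -/
def NehariN {N : ℕ} (l1 l2 β : ℝ) (u v : EuclideanSpace ℝ (Fin N) → ℝ) : Prop :=
  MemW22 u ∧ MemW22 v ∧ Radial u ∧ Radial v ∧ ¬(u = 0 ∧ v = 0) ∧ Psi l1 l2 β u v = 0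



lemma lap_const_mul {N : ℕ} (t : ℝ) (ht : t ≠ 0) (g : EuclideanSpace ℝ (Fin N) → ℝ) :
    lap (fun x => t * g x) = fun x => t * lap g x := by
  funext x
  set e : ℝ ≃L[ℝ] ℝ := ContinuousLinearEquiv.unitsEquivAut ℝ (Units.mk0 t ht) with he
  have hfg : (fun x => t * g x) = e ∘ g := by
    ext y; simp [he, ContinuousLinearEquiv.unitsEquivAut_apply, mul_comm]
  have key : ∀ m, iteratedFDeriv ℝ 2 (fun x => t * g x) x m =
      (iteratedFDeriv ℝ 2 g x m) * t := by
    intro m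
    rw [hfg, ← iteratedFDerivWithin_univ, ← iteratedFDerivWithin_univ,
      e.iteratedFDerivWithin_comp_left g uniqueDiffOn_univ (Set.mem_univ x) 2]
    simp [he, ContinuousLinearEquiv.unitsEquivAut_apply]
  unfold lap
  simp only [key, Finset.mul_sum]
  exact Finset.sum_congr rfl fun i _ => (mul_comm _ _)

lemma nsq_const_mul {N : ℕ} (l t : ℝ) (ht : t ≠ 0) (g : EuclideanSpace ℝ (Fin N) → ℝ) :
    nsq l (fun x => t * g x) = t ^ 2 * nsq l g := by
  unfold nsq
  rw [lap_const_mul t ht g]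
  simp_rw [mul_pow]
  rw [integral_const_mul, integral_const_mul]
  ring

lemma int_sq_pos {N : ℕ} (w : EuclideanSpace ℝ (Fin N) → ℝ) (hc : Continuous w)
    (hi : Integrable (fun x => (w x) ^ 2)) (hw : w ≠ 0) : 0 < ∫ x, (w x) ^ 2 := by
  rw [integral_pos_iff_support_of_nonneg (fun x => sq_nonneg _) hi]
  have hsupp : Function.support (fun x => (w x) ^ 2) = {x | w x ≠ 0} := by
    ext x; simp [Function.support, pow_eq_zero_iff]
  rw [hsupp]
  have hopen : IsOpen {x : EuclideanSpace ℝ (Fin N) | w x ≠ 0} :=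
    isOpen_ne.preimage hc
  have hne : {x : EuclideanSpace ℝ (Fin N) | w x ≠ 0}.Nonempty := by
    by_contra h
    exact hw (funext fun x => by by_contra hx; exact h ⟨x, hx⟩)
  exact hopen.measure_pos volume hne

lemma nsq_nonneg' {N : ℕ} {l : ℝ} (hl : 0 ≤ l) (g : EuclideanSpace ℝ (Fin N) → ℝ) :
    0 ≤ nsq l g :=
  add_nonneg (integral_nonneg fun x => sq_nonneg _)
    (mul_nonneg hl (integral_nonneg fun x => sq_nonneg _))


/-- for (u,v) in the Nehari manifold and t > 0 with
Ψ(t|u|, t|v|) = 0, one has t ≤ 1 and hence Φ(t|u|,t|v|) ≤ Φ(u,v)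
(assuming, as part of the framework, that taking absolute values preserves the norms). -/
theorem stmt14 {N : ℕ} (l1 l2 β : ℝ) (hl1 : 0 < l1) (hl2 : 0 < l2) (hβ : 0 < β)
    (u v : EuclideanSpace ℝ (Fin N) → ℝ) (hmem : NehariN l1 l2 β u v)
    (t : ℝ) (ht : 0 < t)
    (hnorm1 : nsq l1 (fun x => |u x|) = nsq l1 u)
    (hnorm2 : nsq l2 (fun x => |v x|) = nsq l2 v)
    (hΨt : Psi l1 l2 β (fun x => t * |u x|) (fun x => t * |v x|) = 0) :
    t ≤ 1 ∧
      Phi l1 l2 β (fun x => t * |u x|) (fun x => t * |v x|) ≤ Phi l1 l2 β u v := by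
  obtain ⟨hu, hv, _, _, hne, hΨ⟩ := hmem
  set A1 := nsq l1 u with hA1def
  set A2 := nsq l2 v with hA2def
  set a := ∫ x, (u x) ^ 4 with hadef
  set b := ∫ x, |v x| ^ 3 with hbdef
  set c := ∫ x, (u x) ^ 2 * v x with hcdef
  set c' := ∫ x, (u x) ^ 2 * |v x| with hc'def
  -- rewrite hΨ
  unfold Psi at hΨ
  rw [← hA1def, ← hA2def, ← hadef, ← hbdef, ← hcdef] at hΨ
  -- rewrite hΨt
  unfold Psi at hΨt
  have h4 : ∀ x, (t * |u x|) ^ 4 = t ^ 4 * (u x) ^ 4 := fun x => by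
    rw [mul_pow, ← abs_pow, abs_of_nonneg (by positivity : (0:ℝ) ≤ u x ^ 4)]
  have h3 : ∀ x, |(t * |v x| : ℝ)| ^ 3 = t ^ 3 * |v x| ^ 3 := fun x => by
    rw [abs_mul, abs_abs, abs_of_pos ht, mul_pow]
  have hcx : ∀ x, (t * |u x|) ^ 2 * (t * |v x|) = t ^ 3 * ((u x) ^ 2 * |v x|) := fun x => by
    rw [mul_pow, sq_abs]; ring
  rw [nsq_const_mul l1 t ht.ne' (fun x => |u x|),
      nsq_const_mul l2 t ht.ne' (fun x => |v x|), hnorm1, hnorm2] at hΨt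
  simp only [h4, h3, hcx] at hΨt
  rw [integral_const_mul, integral_const_mul, integral_const_mul] at hΨt
  rw [← hadef, ← hbdef, ← hc'def] at hΨt
  -- basic sign facts
  have ha : 0 ≤ a := integral_nonneg fun x => by positivity
  have hb : 0 ≤ b := integral_nonneg fun x => by positivity
  have hc'0 : 0 ≤ c' := integral_nonneg fun x => by positivity
  have hcc' : c ≤ c' := by
    have h1 : c ≤ |c| := le_abs_self _
    have h2 : |c| ≤ ∫ x, ‖(u x) ^ 2 * v x‖ := by
      rw [← Real.norm_eq_abs]
      exact norm_integral_le_integral_norm _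
    have h3' : (∫ x, ‖(u x) ^ 2 * v x‖) = c' := by
      rw [hc'def]
      congr 1
      funext x
      rw [Real.norm_eq_abs, abs_mul, abs_of_nonneg (sq_nonneg (u x))]
    linarith
  have hA1 : 0 ≤ A1 := nsq_nonneg' hl1.le u
  have hA2 : 0 ≤ A2 := nsq_nonneg' hl2.le v
  have hS : 0 < A1 + A2 := by
    rcases not_and_or.mp hne with h | h
    · have hpos : 0 < ∫ x, (u x) ^ 2 :=
        int_sq_pos u (hu.1.continuous) hu.2.1 h
      have : 0 < A1 := by
        have h0 : 0 ≤ ∫ x, (lap u x) ^ 2 := integral_nonneg fun x => sq_nonneg _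
        have : 0 < l1 * ∫ x, (u x) ^ 2 := mul_pos hl1 hpos
        rw [hA1def]; unfold nsq; linarith
      linarith
    · have hpos : 0 < ∫ x, (v x) ^ 2 :=
        int_sq_pos v (hv.1.continuous) hv.2.1 h
      have : 0 < A2 := by
        have h0 : 0 ≤ ∫ x, (lap v x) ^ 2 := integral_nonneg fun x => sq_nonneg _
        have : 0 < l2 * ∫ x, (v x) ^ 2 := mul_pos hl2 hpos
        rw [hA2def]; unfold nsq; linarith
      linarith
  -- t ≤ 1
  have ht1 : t ≤ 1 := by
    by_contra h
    push_neg at h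
    have e3 : t ^ 3 * (A1 + A2) =
        t ^ 3 * a + 1 / 2 * (t ^ 3 * b) + 3 / 2 * β * (t ^ 3 * c) := by
      have hE1 : A1 + A2 = a + 1 / 2 * b + 3 / 2 * β * c := by linarith
      rw [hE1]; ring
    have ht3 : 0 < t ^ 3 := by positivity
    have k1 : t ^ 3 * a ≤ t ^ 4 * a :=
      mul_le_mul_of_nonneg_right (pow_le_pow_right₀ h.le (by norm_num)) ha
    have k2 : 3 / 2 * β * (t ^ 3 * c) ≤ 3 / 2 * β * (t ^ 3 * c') := by
      have := mul_le_mul_of_nonneg_left hcc' ht3.le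
      nlinarith
    have k3 : t ^ 2 * (A1 + A2) < t ^ 3 * (A1 + A2) :=
      mul_lt_mul_of_pos_right (pow_lt_pow_right₀ h (by norm_num)) hS
    linarith
  refine ⟨ht1, ?_⟩
  -- Phi values
  have hΦ : Phi l1 l2 β u v = 1 / 6 * (A1 + A2) + 1 / 12 * a := by
    unfold Phi
    rw [← hA1def, ← hA2def, ← hadef, ← hbdef, ← hcdef]
    linarith
  have hΦt : Phi l1 l2 β (fun x => t * |u x|) (fun x => t * |v x|) =
      1 / 6 * (t ^ 2 * (A1 + A2)) + 1 / 12 * (t ^ 4 * a) := by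
    unfold Phi
    rw [nsq_const_mul l1 t ht.ne' (fun x => |u x|),
        nsq_const_mul l2 t ht.ne' (fun x => |v x|), hnorm1, hnorm2]
    simp only [h4, h3, hcx]
    rw [integral_const_mul, integral_const_mul, integral_const_mul,
        ← hadef, ← hbdef, ← hc'def]
    linarith
  rw [hΦ, hΦt]
  have ht2 : t ^ 2 ≤ 1 := pow_le_one₀ ht.le ht1
  have ht4 : t ^ 4 ≤ 1 := pow_le_one₀ ht.le ht1
  have j1 : t ^ 2 * (A1 + A2) ≤ 1 * (A1 + A2) := mul_le_mul_of_nonneg_right ht2 hS.le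
  have j2 : t ^ 4 * a ≤ 1 * a := mul_le_mul_of_nonneg_right ht4 ha
  linarith
end
end

section
/- Let (uₙ) ⊂ N be a sequence with Φ(uₙ) → c and suppose uₙ ⇀ u₀ weakly in H×H with ∫uₙ⁴ → ∫u₀⁴, ∫|vₙ|³ → ∫|v₀|³, ∫uₙ²vₙ → ∫u₀²v₀. Then ∫u₀⁴ + (1/2)∫|v₀|³ + (3/2)β∫u₀²v₀ ≥ ρ > 0 and hence u₀ ≠ 0, where ρ is the uniform lower bound on ‖·‖² over N. -/
open MeasureTheory Filter Topology

noncomputable section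

/-- for a sequence in the Nehari manifold with Φ(uₙ) → c, converging
weakly with the stated convergences of the nonlinear integrals, the limit satisfies
∫u₀⁴ + (1/2)∫|v₀|³ + (3/2)β∫u₀²v₀ ≥ ρ > 0, hence (u₀,v₀) ≠ (0,0). -/
theorem stmt18 {N : ℕ} (hN2 : 2 ≤ N) (hN7 : N ≤ 7) (l1 l2 β : ℝ)
    (hl1 : 0 < l1) (hl2 : 0 < l2) (hβ : 0 < β) (c ρ : ℝ) (hρ : 0 < ρ)
    (hbound : ∀ w z : EuclideanSpace ℝ (Fin N) → ℝ, NehariN l1 l2 β w z →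
      ρ < nsq l1 w + nsq l2 z)
    (u v : ℕ → EuclideanSpace ℝ (Fin N) → ℝ) (u0 v0 : EuclideanSpace ℝ (Fin N) → ℝ)
    (hmem : ∀ n, NehariN l1 l2 β (u n) (v n))
    (hΦ : Tendsto (fun n => Phi l1 l2 β (u n) (v n)) atTop (𝓝 c))
    (hweak : ∀ φ ψ : EuclideanSpace ℝ (Fin N) → ℝ, MemW22 φ → MemW22 ψ →
      Tendsto (fun n => inr l1 (u n) φ + inr l2 (v n) ψ) atTop
        (𝓝 (inr l1 u0 φ + inr l2 v0 ψ)))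
    (h4 : Tendsto (fun n => ∫ x, (u n x) ^ 4) atTop (𝓝 (∫ x, (u0 x) ^ 4)))
    (h3 : Tendsto (fun n => ∫ x, |v n x| ^ 3) atTop (𝓝 (∫ x, |v0 x| ^ 3)))
    (hc : Tendsto (fun n => ∫ x, (u n x) ^ 2 * v n x) atTop
      (𝓝 (∫ x, (u0 x) ^ 2 * v0 x))) :
    ρ ≤ (∫ x, (u0 x) ^ 4) + (1 / 2) * (∫ x, |v0 x| ^ 3)
        + (3 / 2) * β * (∫ x, (u0 x) ^ 2 * v0 x) ∧
      ¬(u0 = 0 ∧ v0 = 0) := by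
  have key : ρ ≤ (∫ x, (u0 x) ^ 4) + (1 / 2) * (∫ x, |v0 x| ^ 3)
      + (3 / 2) * β * (∫ x, (u0 x) ^ 2 * v0 x) := by
    have hT : Tendsto (fun n => (∫ x, (u n x) ^ 4) + (1 / 2) * (∫ x, |v n x| ^ 3)
        + (3 / 2) * β * (∫ x, (u n x) ^ 2 * v n x)) atTop
        (𝓝 ((∫ x, (u0 x) ^ 4) + (1 / 2) * (∫ x, |v0 x| ^ 3)
          + (3 / 2) * β * (∫ x, (u0 x) ^ 2 * v0 x))) := by
      exact (h4.add (h3.const_mul _)).add (hc.const_mul _)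
    refine ge_of_tendsto hT (Filter.Eventually.of_forall fun n => ?_)
    have hm := hmem n
    have hpsi := hm.2.2.2.2.2
    have hb := hbound (u n) (v n) hm
    unfold Psi at hpsi
    linarith
  refine ⟨key, ?_⟩
  rintro ⟨hu0, hv0⟩
  subst hu0; subst hv0
  simp only [Pi.zero_apply] at key
  norm_num at key
  linarith
end
end
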